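/- arXiv:1512.05313 — 2 statements merged into one kernel-verified Lean document; each statement's English description precedes it below -/
import Mathlib

section
/- Let C be a category with finite products and finite coproducts which is distributive, and let R be an object of C such that the exponential R^A exists for every object A of C. Then the category of continuations R_C, i.e. the full subcategory of C consisting of the objects of the form R^A for A an object of C, is cartesian closed: its terminal object is R^0, the cartesian product of R^A and R^B is R^(A⊕B), and the exponential of R^B by R^A is R^(R^A × B). -/
open CategoryTheory CategoryTheory.Limits

universe v u

/-- The data of an exponential `R^A` in a category `C` with binary products:
an object `obj` together with a bijection `(X ⨯ A ⟶ R) ≃ (X ⟶ obj)`, natural in `X`. -/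
structure ExpObj {C : Type u} [Category.{v} C] [HasBinaryProducts C] (R A : C) where
  obj : C
  curry : ∀ {X : C}, (X ⨯ A ⟶ R) → (X ⟶ obj)
  uncurry : ∀ {X : C}, (X ⟶ obj) → (X ⨯ A ⟶ R)
  curry_uncurry : ∀ {X : C} (f : X ⟶ obj), curry (uncurry f) = f
  uncurry_curry : ∀ {X : C} (f : X ⨯ A ⟶ R), uncurry (curry f) = f
  curry_natural : ∀ {X Y : C} (h : Y ⟶ X) (f : X ⨯ A ⟶ R),
      curry (prod.map h (𝟙 A) ≫ f) = h ≫ curry f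

/-- The canonical distributivity morphism `(A×B) ⊕ (A×D) ⟶ A×(B⊕D)`. -/
noncomputable def distCan {C : Type u} [Category.{v} C] [HasBinaryProducts C]
    [HasBinaryCoproducts C] (A B D : C) : (A ⨯ B) ⨿ (A ⨯ D) ⟶ A ⨯ (B ⨿ D) :=
  coprod.desc (prod.map (𝟙 A) coprod.inl) (prod.map (𝟙 A) coprod.inr)

/-- The contravariant action `R^f : R^B ⟶ R^A` of the functor `R^(-)` on `f : A ⟶ B`. -/
noncomputable def rPow {C : Type u} [Category.{v} C] [HasBinaryProducts C] {R : C}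
    (e : ∀ A : C, ExpObj R A) {A B : C} (f : A ⟶ B) : (e B).obj ⟶ (e A).obj :=
  (e A).curry (prod.map (𝟙 (e B).obj) f ≫ (e B).uncurry (𝟙 (e B).obj))

section Aux
variable {C : Type u} [Category.{v} C] [HasBinaryProducts C] [HasBinaryCoproducts C]

lemma ExpObj.hom_ext' {R A : C} (E : ExpObj R A) {X : C} {f g : X ⟶ E.obj}
    (h : E.uncurry f = E.uncurry g) : f = g := by
  rw [← E.curry_uncurry f, h, E.curry_uncurry]

lemma ExpObj.uncurry_natural {R A : C} (E : ExpObj R A) {X Y : C} (h : Y ⟶ X)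
    (f : X ⟶ E.obj) : E.uncurry (h ≫ f) = prod.map h (𝟙 A) ≫ E.uncurry f := by
  have h1 := E.curry_natural h (E.uncurry f)
  rw [E.curry_uncurry] at h1
  rw [← h1, E.uncurry_curry]

lemma ExpObj.uncurry_eq {R A : C} (E : ExpObj R A) {X : C} (f : X ⟶ E.obj) :
    E.uncurry f = prod.map f (𝟙 A) ≫ E.uncurry (𝟙 E.obj) := by
  simpa using E.uncurry_natural f (𝟙 E.obj)

lemma uncurry_rPow {R : C} (e : ∀ A : C, ExpObj R A) {A B X : C} (f : A ⟶ B)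
    (h : X ⟶ (e B).obj) :
    (e A).uncurry (h ≫ rPow e f) = prod.map (𝟙 X) f ≫ (e B).uncurry h := by
  rw [(e A).uncurry_natural h (rPow e f), rPow, (e A).uncurry_curry, (e B).uncurry_eq h,
    ← Category.assoc, ← Category.assoc, prod.map_map, prod.map_map]
  simp

lemma inl_distCan (A B D : C) :
    coprod.inl ≫ distCan A B D = prod.map (𝟙 A) coprod.inl := by simp [distCan, coprod.inl_desc]

lemma inr_distCan (A B D : C) :
    coprod.inr ≫ distCan A B D = prod.map (𝟙 A) coprod.inr := by simp [distCan, coprod.inr_desc]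

/-- The pairing map `R^U ⨯ R^V ⟶ R^{U ⊕ V}`. -/
noncomputable def pairP {R : C} (e : ∀ A : C, ExpObj R A)
    (hdist : ∀ A B D : C, IsIso (distCan A B D)) (U V : C) :
    ((e U).obj ⨯ (e V).obj : C) ⟶ (e (U ⨿ V)).obj :=
  letI := hdist ((e U).obj ⨯ (e V).obj) U V
  (e (U ⨿ V)).curry (inv (distCan _ U V) ≫
    coprod.desc (prod.map prod.fst (𝟙 U) ≫ (e U).uncurry (𝟙 _))
                (prod.map prod.snd (𝟙 V) ≫ (e V).uncurry (𝟙 _)))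

lemma pairP_inl {R : C} (e : ∀ A : C, ExpObj R A)
    (hdist : ∀ A B D : C, IsIso (distCan A B D)) (U V : C) :
    pairP e hdist U V ≫ rPow e coprod.inl = prod.fst := by
  letI := hdist ((e U).obj ⨯ (e V).obj) U V
  apply (e U).hom_ext'
  have hinv : prod.map (𝟙 ((e U).obj ⨯ (e V).obj)) coprod.inl ≫
      inv (distCan ((e U).obj ⨯ (e V).obj) U V) = coprod.inl := by
    rw [IsIso.comp_inv_eq, inl_distCan]
  rw [uncurry_rPow, pairP, (e (U ⨿ V)).uncurry_curry, ← Category.assoc, hinv,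
    coprod.inl_desc, ← (e U).uncurry_eq]

lemma pairP_inr {R : C} (e : ∀ A : C, ExpObj R A)
    (hdist : ∀ A B D : C, IsIso (distCan A B D)) (U V : C) :
    pairP e hdist U V ≫ rPow e coprod.inr = prod.snd := by
  letI := hdist ((e U).obj ⨯ (e V).obj) U V
  apply (e V).hom_ext'
  have hinv : prod.map (𝟙 ((e U).obj ⨯ (e V).obj)) coprod.inr ≫
      inv (distCan ((e U).obj ⨯ (e V).obj) U V) = coprod.inr := by
    rw [IsIso.comp_inv_eq, inr_distCan]
  rw [uncurry_rPow, pairP, (e (U ⨿ V)).uncurry_curry, ← Category.assoc, hinv,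
    coprod.inr_desc, ← (e V).uncurry_eq]

lemma pairP_lift {R : C} (e : ∀ A : C, ExpObj R A)
    (hdist : ∀ A B D : C, IsIso (distCan A B D)) (U V : C) :
    prod.lift (rPow e (coprod.inl : U ⟶ U ⨿ V)) (rPow e coprod.inr) ≫ pairP e hdist U V
      = 𝟙 (e (U ⨿ V)).obj := by
  letI := hdist ((e U).obj ⨯ (e V).obj) U V
  letI := hdist (e (U ⨿ V)).obj U V
  apply (e (U ⨿ V)).hom_ext'
  rw [(e (U ⨿ V)).uncurry_natural, pairP, (e (U ⨿ V)).uncurry_curry]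
  rw [← cancel_epi (distCan (e (U ⨿ V)).obj U V)]
  apply coprod.hom_ext
  · have hinv : prod.map (𝟙 ((e U).obj ⨯ (e V).obj)) coprod.inl ≫
        inv (distCan ((e U).obj ⨯ (e V).obj) U V) = coprod.inl := by
      rw [IsIso.comp_inv_eq, inl_distCan]
    have h2 : prod.map (𝟙 (e (U ⨿ V)).obj) (coprod.inl : U ⟶ U ⨿ V) ≫
        prod.map (prod.lift (rPow e (coprod.inl : U ⟶ U ⨿ V)) (rPow e coprod.inr)) (𝟙 (U ⨿ V))
        = prod.map (prod.lift (rPow e (coprod.inl : U ⟶ U ⨿ V)) (rPow e coprod.inr)) (𝟙 U) ≫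
          prod.map (𝟙 ((e U).obj ⨯ (e V).obj)) coprod.inl := by
      rw [prod.map_map, prod.map_map]; simp
    rw [← Category.assoc, ← Category.assoc, inl_distCan (e (U ⨿ V)).obj U V,
      Category.assoc, ← Category.assoc, h2]
    rw [Category.assoc, reassoc_of% hinv, coprod.inl_desc, ← Category.assoc, prod.map_map,
      prod.lift_fst, Category.comp_id, ← (e U).uncurry_eq,
      ← Category.id_comp (rPow e (coprod.inl : U ⟶ U ⨿ V)), uncurry_rPow,
      ← Category.assoc, inl_distCan]
  · have hinv : prod.map (𝟙 ((e U).obj ⨯ (e V).obj)) coprod.inr ≫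
        inv (distCan ((e U).obj ⨯ (e V).obj) U V) = coprod.inr := by
      rw [IsIso.comp_inv_eq, inr_distCan]
    have h2 : prod.map (𝟙 (e (U ⨿ V)).obj) (coprod.inr : V ⟶ U ⨿ V) ≫
        prod.map (prod.lift (rPow e (coprod.inl : U ⟶ U ⨿ V)) (rPow e coprod.inr)) (𝟙 (U ⨿ V))
        = prod.map (prod.lift (rPow e (coprod.inl : U ⟶ U ⨿ V)) (rPow e coprod.inr)) (𝟙 V) ≫
          prod.map (𝟙 ((e U).obj ⨯ (e V).obj)) coprod.inr := by
      rw [prod.map_map, prod.map_map]; simp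
    rw [← Category.assoc, ← Category.assoc, inr_distCan (e (U ⨿ V)).obj U V,
      Category.assoc, ← Category.assoc, h2]
    rw [Category.assoc, reassoc_of% hinv, coprod.inr_desc, ← Category.assoc, prod.map_map,
      prod.lift_snd, Category.comp_id, ← (e V).uncurry_eq,
      ← Category.id_comp (rPow e (coprod.inr : V ⟶ U ⨿ V)), uncurry_rPow,
      ← Category.assoc, inr_distCan]


lemma prodInitial_ext [HasInitial C] (hdist : ∀ A B D : C, IsIso (distCan A B D))
    {Z Y : C} (u v : (Z ⨯ ⊥_ C : C) ⟶ Y) : u = v := by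
  letI := hdist Z (⊥_ C) (⊥_ C)
  have hio : (coprod.inl : (⊥_ C : C) ⟶ (⊥_ C) ⨿ (⊥_ C)) = coprod.inr :=
    initial.hom_ext _ _
  have h : (coprod.inl : (Z ⨯ ⊥_ C : C) ⟶ (Z ⨯ ⊥_ C) ⨿ (Z ⨯ ⊥_ C)) = coprod.inr := by
    rw [← cancel_mono (distCan Z (⊥_ C) (⊥_ C)), inl_distCan, inr_distCan, hio]
  calc u = coprod.inl ≫ coprod.desc u v := by simp [coprod.inl_desc]
    _ = coprod.inr ≫ coprod.desc u v := by rw [h]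
    _ = v := by simp [coprod.inr_desc]

/-- The evaluation map `R^{(R^A × B) ⊕ A} ⟶ R^B`. -/
noncomputable def evMap {R : C} (e : ∀ A : C, ExpObj R A) (A B : C) :
    (e (((e A).obj ⨯ B) ⨿ A)).obj ⟶ (e B).obj :=
  (e B).curry (prod.lift (prod.fst ≫ rPow e coprod.inl)
      (prod.lift (prod.fst ≫ rPow e coprod.inr) prod.snd)
    ≫ (e ((e A).obj ⨯ B)).uncurry (𝟙 _))

lemma lift_uncurry {R W : C} (E : ExpObj R W) {Z W' : C} (a : Z ⟶ W') (b : Z ⟶ W)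
    (h' : W' ⟶ E.obj) :
    prod.lift (a ≫ h') b ≫ E.uncurry (𝟙 E.obj) = prod.lift a b ≫ E.uncurry h' := by
  rw [E.uncurry_eq h', ← Category.assoc, prod.lift_map, Category.comp_id]

/-- The main reduction: uncurrying the composite `⟨p₁ ≫ h', p₂⟩ ≫ ev`. -/
lemma ev_eq {R : C} (e : ∀ A : C, ExpObj R A)
    (hdist : ∀ A B D : C, IsIso (distCan A B D)) (A B X : C)
    (h' : (e X).obj ⟶ (e ((e A).obj ⨯ B)).obj) :
    (e B).uncurry ((prod.lift (rPow e (coprod.inl : X ⟶ X ⨿ A) ≫ h') (rPow e coprod.inr)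
        ≫ pairP e hdist ((e A).obj ⨯ B) A) ≫ evMap e A B)
    = prod.lift (prod.fst ≫ rPow e (coprod.inl : X ⟶ X ⨿ A))
        (prod.lift (prod.fst ≫ rPow e (coprod.inr : A ⟶ X ⨿ A)) prod.snd)
      ≫ (e ((e A).obj ⨯ B)).uncurry h' := by
  set g := prod.lift (rPow e (coprod.inl : X ⟶ X ⨿ A) ≫ h') (rPow e coprod.inr)
      ≫ pairP e hdist ((e A).obj ⨯ B) A with hgdef
  have hg1 : g ≫ rPow e (coprod.inl : ((e A).obj ⨯ B) ⟶ ((e A).obj ⨯ B) ⨿ A)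
      = rPow e (coprod.inl : X ⟶ X ⨿ A) ≫ h' := by
    rw [hgdef, Category.assoc, pairP_inl, prod.lift_fst]
  have hg2 : g ≫ rPow e (coprod.inr : A ⟶ ((e A).obj ⨯ B) ⨿ A)
      = rPow e (coprod.inr : A ⟶ X ⨿ A) := by
    rw [hgdef, Category.assoc, pairP_inr, prod.lift_snd]
  rw [(e B).uncurry_natural, evMap, (e B).uncurry_curry, ← Category.assoc,
    prod.comp_lift, prod.comp_lift]
  simp only [prod.map_fst_assoc, prod.map_snd, Category.comp_id, hg1, hg2]
  rw [← Category.assoc prod.fst (rPow e (coprod.inl : X ⟶ X ⨿ A)) h', lift_uncurry]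

lemma Kid {R : C} (e : ∀ A : C, ExpObj R A)
    (hdist : ∀ A B D : C, IsIso (distCan A B D)) (X A B : C) :
    prod.lift (prod.lift prod.fst (prod.snd ≫ prod.fst)) (prod.snd ≫ prod.snd) ≫
      prod.map (pairP e hdist X A) (𝟙 B) ≫
      prod.lift (prod.fst ≫ rPow e (coprod.inl : X ⟶ X ⨿ A))
        (prod.lift (prod.fst ≫ rPow e coprod.inr) prod.snd)
      = 𝟙 ((e X).obj ⨯ ((e A).obj ⨯ B)) := by
  have h1 := pairP_inl e hdist X A
  have h2 := pairP_inr e hdist X A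
  have h3 : prod.lift (prod.snd ≫ prod.fst) (prod.snd ≫ prod.snd)
      = (prod.snd : (e X).obj ⨯ ((e A).obj ⨯ B) ⟶ ((e A).obj ⨯ B : C)) := by
    rw [← prod.comp_lift]; simp
  simp [prod.comp_lift, prod.lift_map, reassoc_of% h1, reassoc_of% h2, h1, h2, h3,
    prod.lift_fst, prod.lift_snd, prod.lift_fst_assoc, prod.lift_snd_assoc, prod.lift_fst_snd]

lemma hEq {R : C} (e : ∀ A : C, ExpObj R A)
    (hdist : ∀ A B D : C, IsIso (distCan A B D)) (X A B : C) :
    prod.lift (prod.fst ≫ rPow e (coprod.inl : X ⟶ X ⨿ A))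
      (prod.lift (prod.fst ≫ rPow e (coprod.inr : A ⟶ X ⨿ A)) prod.snd) ≫
      prod.lift (prod.lift prod.fst (prod.snd ≫ prod.fst)) (prod.snd ≫ prod.snd) ≫
      prod.map (pairP e hdist X A) (𝟙 B)
      = 𝟙 ((e (X ⨿ A)).obj ⨯ B) := by
  have hfst : prod.lift (prod.fst ≫ rPow e (coprod.inl : X ⟶ X ⨿ A))
      (prod.fst ≫ rPow e coprod.inr) ≫ pairP e hdist X A
      = (prod.fst : (e (X ⨿ A)).obj ⨯ B ⟶ _) := by
    rw [← prod.comp_lift, Category.assoc, pairP_lift, Category.comp_id]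
  simp only [prod.lift_map, prod.comp_lift, Category.assoc, prod.lift_fst,
    prod.lift_snd, prod.lift_fst_assoc, prod.lift_snd_assoc, Category.comp_id]
  rw [← Category.assoc, prod.comp_lift]
  simp [hfst, prod.lift_fst, prod.lift_snd, prod.lift_fst_assoc, prod.lift_snd_assoc,
    prod.lift_fst_snd]

end Aux

/-- The category of continuations `R_C` (the full subcategory of `C` on the objects `R^A`;
its hom-sets coincide with those of `C`) is cartesian closed:
* its terminal object is `R^0` (every object `R^X` has a unique morphism into `R^0`);
* the cartesian product of `R^A` and `R^B` is `R^(A⊕B)`, with projections `R^{in_A}`,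
  `R^{in_B}` (there is a pairing operation `pr` satisfying the universal property);
* the exponential of `R^B` by `R^A` is `R^(R^A × B)`: there is an evaluation morphism
  from the product `R^((R^A × B) ⊕ A)` of `R^(R^A × B)` and `R^A` to `R^B` through which
  every morphism from a product `R^(X ⊕ A)` factors uniquely. -/
theorem continuations_cartesianClosed {C : Type u} [Category.{v} C]
    [HasFiniteProducts C] [HasFiniteCoproducts C]
    (hdist : ∀ A B D : C, IsIso (distCan A B D))
    (R : C) (e : ∀ A : C, ExpObj R A) :
    -- R^0 is terminal in the category of continuations
    (∀ X : C, ∃! f : (e X).obj ⟶ (e (⊥_ C)).obj, True) ∧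
    -- R^(A ⊕ B) is the cartesian product of R^A and R^B
    (∃ pr : ∀ (X U V : C),
        ((e X).obj ⟶ (e U).obj) → ((e X).obj ⟶ (e V).obj) → ((e X).obj ⟶ (e (U ⨿ V)).obj),
      (∀ (X U V : C) (f : (e X).obj ⟶ (e U).obj) (g : (e X).obj ⟶ (e V).obj),
          pr X U V f g ≫ rPow e coprod.inl = f ∧ pr X U V f g ≫ rPow e coprod.inr = g) ∧
      (∀ (X U V : C) (h : (e X).obj ⟶ (e (U ⨿ V)).obj),
          pr X U V (h ≫ rPow e coprod.inl) (h ≫ rPow e coprod.inr) = h) ∧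
      -- R^(R^A × B) is the exponential of R^B by R^A
      (∀ A B : C, ∃ ev : (e (((e A).obj ⨯ B) ⨿ A)).obj ⟶ (e B).obj,
        ∀ (X : C) (f : (e (X ⨿ A)).obj ⟶ (e B).obj),
          ∃! h : (e X).obj ⟶ (e ((e A).obj ⨯ B)).obj,
            pr (X ⨿ A) ((e A).obj ⨯ B) A (rPow e coprod.inl ≫ h) (rPow e coprod.inr) ≫ ev
              = f)) := by
  constructor
  · intro X
    refine ⟨(e (⊥_ C)).curry (prod.snd ≫ initial.to R), trivial, fun g _ => ?_⟩
    exact (e (⊥_ C)).hom_ext' (prodInitial_ext hdist _ _)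
  · refine ⟨fun X U V f g => prod.lift f g ≫ pairP e hdist U V,
      fun X U V f g => ?_, fun X U V h => ?_, fun A B => ?_⟩
    · constructor
      · rw [Category.assoc, pairP_inl, prod.lift_fst]
      · rw [Category.assoc, pairP_inr, prod.lift_snd]
    · have h1 : prod.lift (h ≫ rPow e coprod.inl) (h ≫ rPow e coprod.inr)
          = h ≫ prod.lift (rPow e (coprod.inl : U ⟶ U ⨿ V)) (rPow e coprod.inr) := by simp
      show prod.lift (h ≫ rPow e coprod.inl) (h ≫ rPow e coprod.inr) ≫ pairP e hdist U V = h
      rw [h1, Category.assoc, pairP_lift, Category.comp_id]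
    · refine ⟨evMap e A B, fun X f => ?_⟩
      refine ⟨(e ((e A).obj ⨯ B)).curry
        (prod.lift (prod.lift prod.fst (prod.snd ≫ prod.fst)) (prod.snd ≫ prod.snd) ≫
          prod.map (pairP e hdist X A) (𝟙 B) ≫ (e B).uncurry f), ?_, ?_⟩
      · show (prod.lift (rPow e coprod.inl ≫ _) (rPow e coprod.inr)
            ≫ pairP e hdist ((e A).obj ⨯ B) A) ≫ evMap e A B = f
        apply (e B).hom_ext'
        rw [ev_eq e hdist A B X, (e ((e A).obj ⨯ B)).uncurry_curry,
          reassoc_of% (hEq e hdist X A B)]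
      · intro h' hh'
        have hthis := congrArg (e B).uncurry hh'
        rw [ev_eq e hdist A B X] at hthis
        apply (e ((e A).obj ⨯ B)).hom_ext'
        rw [(e ((e A).obj ⨯ B)).uncurry_curry, ← hthis,
          reassoc_of% (Kid e hdist X A B)]
end

section
/- In call-by-name λμ-calculus, consider the equational theory generated as a congruence on typed terms by the contextual closures of (β⊥): [α]μβ.M = M[α/β], and (η⊥): μα.[α]M = M for α ∉ FV(M). Over this theory, the equation scheme (β⊥^Sel): [α]M = M for every term M of type ⊥, and the equation scheme (ζ⊥): μα.M = M[□/[α]□] for every μ-variable α of type ⊥, are equivalent: the congruence generated by {β⊥, η⊥, β⊥^Sel} equals the congruence generated by {β⊥, η⊥, ζ⊥}. -/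
/-! # Call-by-name λμ-calculus (Selinger's version), intrinsically typed -/

/-- Types of λμ-calculus over a set of base types. -/
inductive LTy (B : Type) : Type
  | base : B → LTy B
  | arr : LTy B → LTy B → LTy B
  | prd : LTy B → LTy B → LTy B
  | bot : LTy B

/-- Type-valued membership: de Bruijn pointers into a typing context. -/
inductive Idx {α : Type} : α → List α → Type
  | here {a : α} {l : List α} : Idx a (a :: l)
  | there {a b : α} {l : List α} : Idx a l → Idx a (b :: l)

variable {B : Type} (K : LTy B → Type)

/-- Typed terms of λμ-calculus: `Tm K Γ τ Δ` is the set of terms `M` with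
`Γ ⊢ M : τ | Δ`, over a signature with constants `K`. -/
inductive Tm : List (LTy B) → LTy B → List (LTy B) → Type
  | var {Γ τ Δ} : Idx τ Γ → Tm Γ τ Δ
  | cst {Γ τ Δ} : K τ → Tm Γ τ Δ
  | lam {Γ σ τ Δ} : Tm (σ :: Γ) τ Δ → Tm Γ (.arr σ τ) Δ
  | app {Γ σ τ Δ} : Tm Γ (.arr σ τ) Δ → Tm Γ σ Δ → Tm Γ τ Δ
  | pair {Γ σ τ Δ} : Tm Γ σ Δ → Tm Γ τ Δ → Tm Γ (.prd σ τ) Δ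
  | fst {Γ σ τ Δ} : Tm Γ (.prd σ τ) Δ → Tm Γ σ Δ
  | snd {Γ σ τ Δ} : Tm Γ (.prd σ τ) Δ → Tm Γ τ Δ
  | mabs {Γ σ Δ} : Tm Γ .bot (σ :: Δ) → Tm Γ σ Δ
  | name {Γ σ Δ} : Idx σ Δ → Tm Γ σ Δ → Tm Γ .bot Δ

variable {K}

/-- Lifting a pointer renaming under a binder. -/
def idxLift {α : Type} {Δ Δ' : List α} {σ : α} (r : ∀ τ, Idx τ Δ → Idx τ Δ') :
    ∀ τ, Idx τ (σ :: Δ) → Idx τ (σ :: Δ')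
  | _, .here => .here
  | _, .there i => .there (r _ i)

/-- Renaming of the μ-context. -/
def Tm.mren : ∀ {Γ τ Δ Δ'}, (∀ σ, Idx σ Δ → Idx σ Δ') → Tm K Γ τ Δ → Tm K Γ τ Δ'
  | _, _, _, _, _, .var i => .var i
  | _, _, _, _, _, .cst c => .cst c
  | _, _, _, _, r, .lam M => .lam (M.mren r)
  | _, _, _, _, r, .app M N => .app (M.mren r) (N.mren r)
  | _, _, _, _, r, .pair M N => .pair (M.mren r) (N.mren r)
  | _, _, _, _, r, .fst M => .fst (M.mren r)
  | _, _, _, _, r, .snd M => .snd (M.mren r)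
  | _, _, _, _, r, .mabs M => .mabs (M.mren (idxLift r))
  | _, _, _, _, r, .name e M => .name (r _ e) (M.mren r)

/-- The μ-renaming `[α/β]` sending the most recently bound μ-variable to `α`. -/
def mconsRen {Δ Δ' : List (LTy B)} {σ : LTy B} (α : Idx σ Δ')
    (r : ∀ τ, Idx τ Δ → Idx τ Δ') : ∀ τ, Idx τ (σ :: Δ) → Idx τ Δ'
  | _, .here => α
  | _, .there i => r _ i

/-- Insertion of an element into a list at a given position. -/
inductive Ins {α : Type} (a : α) : List α → List α → Type
  | zero {l} : Ins a l (a :: l)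
  | succ {b l l'} : Ins a l l' → Ins a (b :: l) (b :: l')

/-- Splitting a pointer along an insertion: either it is the inserted element,
or it points into the smaller list. -/
def Ins.split {α : Type} {a : α} :
    ∀ {l l' : List α}, Ins a l l' → ∀ {b}, Idx b l' → Idx b l ⊕ PLift (b = a)
  | _, _, .zero, _, .here => .inr ⟨rfl⟩
  | _, _, .zero, _, .there i => .inl i
  | _, _, .succ _, _, .here => .inl .here
  | _, _, .succ ins, _, .there i =>
      match ins.split i with
      | .inl j => .inl (.there j)
      | .inr h => .inr h

/-- The operation `M[□/[α]□]` erasing all namings `[α]P ↦ P` of a μ-variable `α` of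
type `⊥` (at the position described by the insertion). -/
def Tm.erase : ∀ {Γ τ Δ₀ Δ}, Ins (LTy.bot : LTy B) Δ₀ Δ → Tm K Γ τ Δ → Tm K Γ τ Δ₀
  | _, _, _, _, _, .var i => .var i
  | _, _, _, _, _, .cst c => .cst c
  | _, _, _, _, ins, .lam M => .lam (M.erase ins)
  | _, _, _, _, ins, .app M N => .app (M.erase ins) (N.erase ins)
  | _, _, _, _, ins, .pair M N => .pair (M.erase ins) (N.erase ins)
  | _, _, _, _, ins, .fst M => .fst (M.erase ins)
  | _, _, _, _, ins, .snd M => .snd (M.erase ins)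
  | _, _, _, _, ins, .mabs M => .mabs (M.erase ins.succ)
  | _, _, _, _, ins, .name e M =>
      match ins.split e with
      | .inl e' => .name e' (M.erase ins)
      | .inr h => h.down ▸ M.erase ins

/-- Axioms `β⊥`, `η⊥` and Selinger's `β⊥` (`[α]M = M` for `M : ⊥`). -/
inductive AxSel : ∀ {Γ : List (LTy B)} {τ : LTy B} {Δ : List (LTy B)},
    Tm K Γ τ Δ → Tm K Γ τ Δ → Prop
  | betaBot {Γ τ Δ} (α : Idx τ Δ) (M : Tm K Γ .bot (τ :: Δ)) :
      AxSel (.name α (.mabs M)) (M.mren (mconsRen α (fun _ i => i)))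
  | etaBot {Γ τ Δ} (M : Tm K Γ τ Δ) :
      AxSel (.mabs (.name .here (M.mren (fun _ i => .there i)))) M
  | betaSel {Γ Δ} (α : Idx (LTy.bot : LTy B) Δ) (M : Tm K Γ .bot Δ) :
      AxSel (.name α M) M

/-- Axioms `β⊥`, `η⊥` and `ζ⊥` (`μα.M = M[□/[α]□]` for `α : ⊥`). -/
inductive AxZeta : ∀ {Γ : List (LTy B)} {τ : LTy B} {Δ : List (LTy B)},
    Tm K Γ τ Δ → Tm K Γ τ Δ → Prop
  | betaBot {Γ τ Δ} (α : Idx τ Δ) (M : Tm K Γ .bot (τ :: Δ)) :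
      AxZeta (.name α (.mabs M)) (M.mren (mconsRen α (fun _ i => i)))
  | etaBot {Γ τ Δ} (M : Tm K Γ τ Δ) :
      AxZeta (.mabs (.name .here (M.mren (fun _ i => .there i)))) M
  | zetaBot {Γ Δ} (M : Tm K Γ .bot (.bot :: Δ)) :
      AxZeta (.mabs M) (M.erase .zero)

/-- The congruence on typed terms generated by a set of axioms. -/
inductive EqT (Ax : ∀ {Γ : List (LTy B)} {τ : LTy B} {Δ : List (LTy B)},
    Tm K Γ τ Δ → Tm K Γ τ Δ → Prop) :
    ∀ {Γ : List (LTy B)} {τ : LTy B} {Δ : List (LTy B)}, Tm K Γ τ Δ → Tm K Γ τ Δ → Prop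
  | ax {Γ τ Δ} {M N : Tm K Γ τ Δ} : Ax M N → EqT Ax M N
  | refl {Γ τ Δ} (M : Tm K Γ τ Δ) : EqT Ax M M
  | symm {Γ τ Δ} {M N : Tm K Γ τ Δ} : EqT Ax M N → EqT Ax N M
  | trans {Γ τ Δ} {M N P : Tm K Γ τ Δ} : EqT Ax M N → EqT Ax N P → EqT Ax M P
  | lamC {Γ σ τ Δ} {M M' : Tm K (σ :: Γ) τ Δ} : EqT Ax M M' → EqT Ax (.lam M) (.lam M')
  | appC {Γ σ τ Δ} {M M' : Tm K Γ (.arr σ τ) Δ} {N N' : Tm K Γ σ Δ} :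
      EqT Ax M M' → EqT Ax N N' → EqT Ax (.app M N) (.app M' N')
  | pairC {Γ σ τ Δ} {M M' : Tm K Γ σ Δ} {N N' : Tm K Γ τ Δ} :
      EqT Ax M M' → EqT Ax N N' → EqT Ax (.pair M N) (.pair M' N')
  | fstC {Γ σ τ Δ} {M M' : Tm K Γ (.prd σ τ) Δ} : EqT Ax M M' → EqT Ax (.fst M) (.fst M')
  | sndC {Γ σ τ Δ} {M M' : Tm K Γ (.prd σ τ) Δ} : EqT Ax M M' → EqT Ax (.snd M) (.snd M')
  | mabsC {Γ σ Δ} {M M' : Tm K Γ .bot (σ :: Δ)} : EqT Ax M M' → EqT Ax (.mabs M) (.mabs M')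
  | nameC {Γ σ Δ} (α : Idx σ Δ) {M M' : Tm K Γ σ Δ} :
      EqT Ax M M' → EqT Ax (.name α M) (.name α M')

/-! ## Auxiliary lemmas -/

theorem Tm.mren_ext : ∀ {Γ τ Δ Δ'} (M : Tm K Γ τ Δ) {r r' : ∀ σ, Idx σ Δ → Idx σ Δ'},
    (∀ σ i, r σ i = r' σ i) → M.mren r = M.mren r'
  | _, _, _, _, .var _, _, _, _ => rfl
  | _, _, _, _, .cst _, _, _, _ => rfl
  | _, _, _, _, .lam M, _, _, h => by simp only [Tm.mren, M.mren_ext h]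
  | _, _, _, _, .app M N, _, _, h => by
      simp only [Tm.mren, M.mren_ext h, N.mren_ext h]
  | _, _, _, _, .pair M N, _, _, h => by
      simp only [Tm.mren, M.mren_ext h, N.mren_ext h]
  | _, _, _, _, .fst M, _, _, h => by simp only [Tm.mren, M.mren_ext h]
  | _, _, _, _, .snd M, _, _, h => by simp only [Tm.mren, M.mren_ext h]
  | _, _, _, _, .mabs M, _, _, h => by
      simp only [Tm.mren]
      congr 1
      exact M.mren_ext (fun σ i => by cases i <;> simp [idxLift, h])
  | _, _, _, _, .name e M, _, _, h => by simp only [Tm.mren, M.mren_ext h, h]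

theorem Tm.mren_id : ∀ {Γ τ Δ} (M : Tm K Γ τ Δ), M.mren (fun _ i => i) = M
  | _, _, _, .var _ => rfl
  | _, _, _, .cst _ => rfl
  | _, _, _, .lam M => by simp only [Tm.mren, M.mren_id]
  | _, _, _, .app M N => by simp only [Tm.mren, M.mren_id, N.mren_id]
  | _, _, _, .pair M N => by simp only [Tm.mren, M.mren_id, N.mren_id]
  | _, _, _, .fst M => by simp only [Tm.mren, M.mren_id]
  | _, _, _, .snd M => by simp only [Tm.mren, M.mren_id]
  | _, _, _, .mabs M => by
      simp only [Tm.mren]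
      rw [M.mren_ext (r' := fun _ i => i) (fun σ i => by cases i <;> rfl), M.mren_id]
  | _, _, _, .name e M => by simp only [Tm.mren, M.mren_id]

theorem Tm.mren_mren : ∀ {Γ τ Δ Δ' Δ''} (M : Tm K Γ τ Δ)
    (r : ∀ σ, Idx σ Δ → Idx σ Δ') (s : ∀ σ, Idx σ Δ' → Idx σ Δ''),
    (M.mren r).mren s = M.mren (fun σ i => s σ (r σ i))
  | _, _, _, _, _, .var _, _, _ => rfl
  | _, _, _, _, _, .cst _, _, _ => rfl
  | _, _, _, _, _, .lam M, r, s => by simp only [Tm.mren, M.mren_mren]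
  | _, _, _, _, _, .app M N, r, s => by
      simp only [Tm.mren, M.mren_mren, N.mren_mren]
  | _, _, _, _, _, .pair M N, r, s => by
      simp only [Tm.mren, M.mren_mren, N.mren_mren]
  | _, _, _, _, _, .fst M, r, s => by simp only [Tm.mren, M.mren_mren]
  | _, _, _, _, _, .snd M, r, s => by simp only [Tm.mren, M.mren_mren]
  | _, _, _, _, _, .mabs M, r, s => by
      simp only [Tm.mren, M.mren_mren]
      congr 1
      exact M.mren_ext (fun σ i => by cases i <;> rfl)
  | _, _, _, _, _, .name e M, r, s => by simp only [Tm.mren, M.mren_mren]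

/-- The weakening renaming induced by an insertion. -/
def Ins.wk {α : Type} {a : α} : ∀ {l l' : List α}, Ins a l l' → ∀ b, Idx b l → Idx b l'
  | _, _, .zero => fun _ i => .there i
  | _, _, .succ ins => idxLift ins.wk

theorem Ins.split_wk {α : Type} {a : α} :
    ∀ {l l' : List α} (ins : Ins a l l') {b} (i : Idx b l),
      ins.split (ins.wk b i) = .inl i
  | _, _, .zero, _, _ => rfl
  | _, _, .succ _, _, .here => rfl
  | _, _, .succ ins, _, .there i => by
      show (match ins.split (ins.wk _ i) with
        | .inl j => (.inl (.there j) : Idx _ _ ⊕ PLift _)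
        | .inr h => .inr h) = .inl (Idx.there i)
      rw [ins.split_wk i]

theorem Ins.wk_split {α : Type} {a : α} :
    ∀ {l l' : List α} (ins : Ins a l l') {b} (e : Idx b l') (e' : Idx b l),
      ins.split e = .inl e' → ins.wk b e' = e
  | _, _, .zero, _, .here, _, h => by exact absurd h (by simp [Ins.split])
  | _, _, .zero, _, .there i, e', h => by
      simp only [Ins.split] at h; cases h; rfl
  | _, _, .succ _, _, .here, e', h => by
      simp only [Ins.split] at h; cases h; rfl
  | _, _, .succ ins, _, .there i, e', h => by
      revert h
      show (match ins.split i with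
        | .inl j => (.inl (.there j) : Idx _ _ ⊕ PLift _)
        | .inr h => .inr h) = .inl e' → _
      cases hs : ins.split i with
      | inl j =>
          intro h; cases h
          show Idx.there (ins.wk _ j) = Idx.there i
          rw [ins.wk_split i j hs]
      | inr h' => intro h; cases h

theorem Tm.erase_mren_wk : ∀ {Γ τ Δ₀ Δ} (ins : Ins (LTy.bot : LTy B) Δ₀ Δ)
    (M : Tm K Γ τ Δ₀), (M.mren ins.wk).erase ins = M
  | _, _, _, _, _, .var _ => rfl
  | _, _, _, _, _, .cst _ => rfl
  | _, _, _, _, ins, .lam M => by simp only [Tm.mren, Tm.erase, erase_mren_wk]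
  | _, _, _, _, ins, .app M N => by simp only [Tm.mren, Tm.erase, erase_mren_wk]
  | _, _, _, _, ins, .pair M N => by simp only [Tm.mren, Tm.erase, erase_mren_wk]
  | _, _, _, _, ins, .fst M => by simp only [Tm.mren, Tm.erase, erase_mren_wk]
  | _, _, _, _, ins, .snd M => by simp only [Tm.mren, Tm.erase, erase_mren_wk]
  | _, _, _, _, ins, .mabs M => by
      simp only [Tm.mren, Tm.erase]
      exact congrArg Tm.mabs (erase_mren_wk ins.succ M)
  | _, _, _, _, ins, .name e M => by
      show Tm.erase ins (.name (ins.wk _ e) (M.mren ins.wk)) = .name e M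
      simp only [Tm.erase, ins.split_wk e, erase_mren_wk]

theorem Tm.erase_zero_mren {Γ τ Δ} (M : Tm K Γ τ Δ) :
    (M.mren (fun _ i => .there i)).erase (.zero (a := LTy.bot)) = M :=
  M.erase_mren_wk .zero

theorem Tm.mren_mcons_there {Γ τ σ Δ} (M : Tm K Γ τ Δ) (α : Idx σ Δ) :
    (M.mren (fun _ i => .there i)).mren (mconsRen α (fun _ i => i)) = M := by
  rw [Tm.mren_mren]
  exact (M.mren_ext (r' := fun _ i => i) fun σ i => rfl).trans M.mren_id

/-- Transport of congruence along inclusion of axioms. -/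
theorem EqT.mono {Ax1 Ax2 : ∀ {Γ : List (LTy B)} {τ : LTy B} {Δ : List (LTy B)},
    Tm K Γ τ Δ → Tm K Γ τ Δ → Prop}
    (h : ∀ {Γ τ Δ} {M N : Tm K Γ τ Δ}, Ax1 M N → EqT @Ax2 M N)
    {Γ τ Δ} {M N : Tm K Γ τ Δ} (e : EqT @Ax1 M N) : EqT @Ax2 M N := by
  induction e with
  | ax a => exact h a
  | refl M => exact .refl M
  | symm _ ih => exact .symm ih
  | trans _ _ ih1 ih2 => exact .trans ih1 ih2
  | lamC _ ih => exact .lamC ih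
  | appC _ _ ih1 ih2 => exact .appC ih1 ih2
  | pairC _ _ ih1 ih2 => exact .pairC ih1 ih2
  | fstC _ ih => exact .fstC ih
  | sndC _ ih => exact .sndC ih
  | mabsC _ ih => exact .mabsC ih
  | nameC α _ ih => exact .nameC α ih

/-- Selinger's `β⊥` is derivable from `β⊥`, `η⊥`, `ζ⊥`. -/
theorem betaSel_of_zeta {Γ Δ} (α : Idx (LTy.bot : LTy B) Δ) (M : Tm K Γ .bot Δ) :
    EqT (fun {_ _ _} => AxZeta (K := K)) (.name α M) M := by
  have h1 : EqT (fun {_ _ _} => AxZeta (K := K))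
      (.mabs (M.mren (fun _ i => .there i))) M := by
    have := EqT.ax (Ax := fun {_ _ _} => AxZeta (K := K))
      (AxZeta.zetaBot (M.mren (fun _ i => .there i)))
    rwa [Tm.erase_zero_mren] at this
  refine .trans (.nameC α (.symm h1)) ?_
  have h2 := EqT.ax (Ax := fun {_ _ _} => AxZeta (K := K))
    (AxZeta.betaBot α (M.mren (fun _ i => .there i)))
  rwa [Tm.mren_mcons_there] at h2

/-- Over `β⊥`, `η⊥`, Selinger's `β⊥`, every term is equal to the erasure of any
`⊥`-typed μ-variable (weakened back). -/
theorem eraseApprox {Γ τ Δ} (M : Tm K Γ τ Δ) :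
    ∀ {Δ₀} (ins : Ins (LTy.bot : LTy B) Δ₀ Δ),
    EqT (fun {_ _ _} => AxSel (K := K)) M ((M.erase ins).mren ins.wk) := by
  induction M with
  | var i => exact fun _ => .refl _
  | cst c => exact fun _ => .refl _
  | lam M ih => exact fun ins => .lamC (ih ins)
  | app M N ihM ihN => exact fun ins => .appC (ihM ins) (ihN ins)
  | pair M N ihM ihN => exact fun ins => .pairC (ihM ins) (ihN ins)
  | fst M ih => exact fun ins => .fstC (ih ins)
  | snd M ih => exact fun ins => .sndC (ih ins)
  | mabs M ih => exact fun ins => .mabsC (ih ins.succ)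
  | name e M ih =>
      intro Δ₀ ins
      cases hs : ins.split e with
      | inl e' =>
          have he : Tm.erase ins (.name e M) = .name e' (M.erase ins) := by
            simp only [Tm.erase, hs]
          rw [he]
          show EqT _ (.name e M) (.name (ins.wk _ e') ((M.erase ins).mren ins.wk))
          rw [ins.wk_split e e' hs]
          exact .nameC e (ih ins)
      | inr h =>
          obtain ⟨h⟩ := h
          subst h
          have he : Tm.erase ins (.name e M) = M.erase ins := by
            simp only [Tm.erase, hs]
          rw [he]
          exact .trans (.ax (AxSel.betaSel e M)) (ih ins)

/-- `ζ⊥` is derivable from `β⊥`, `η⊥`, Selinger's `β⊥`. -/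
theorem zeta_of_betaSel {Γ Δ} (M : Tm K Γ (LTy.bot : LTy B) (.bot :: Δ)) :
    EqT (fun {_ _ _} => AxSel (K := K)) (.mabs M) (M.erase .zero) := by
  refine .trans (.mabsC (eraseApprox M Ins.zero)) ?_
  refine .trans (.mabsC (.symm (.ax (AxSel.betaSel .here
    ((M.erase .zero).mren (fun _ i => .there i)))))) ?_
  exact .ax (AxSel.etaBot (M.erase .zero))

/-- Over the contextual closures of `β⊥` and `η⊥`, Selinger's equation `β⊥`
(`[α]M = M` for `M : ⊥`) and the equation `ζ⊥` (`μα.M = M[□/[α]□]` for `α : ⊥`)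
are equivalent: the congruences they generate coincide. -/
theorem betaSel_equiv_zetaBot {B : Type} (K : LTy B → Type)
    {Γ : List (LTy B)} {τ : LTy B} {Δ : List (LTy B)} (M N : Tm K Γ τ Δ) :
    EqT (fun {_ _ _} => AxSel (K := K)) M N ↔ EqT (fun {_ _ _} => AxZeta (K := K)) M N := by
  constructor
  · refine EqT.mono (fun {Γ τ Δ} {M N} a => ?_)
    cases a
    case betaBot β P => exact .ax (AxZeta.betaBot β P)
    case etaBot => exact .ax (AxZeta.etaBot N)
    case betaSel β => exact betaSel_of_zeta β N
  · refine EqT.mono (fun {Γ τ Δ} {M N} a => ?_)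
    cases a
    case betaBot β P => exact .ax (AxSel.betaBot β P)
    case etaBot => exact .ax (AxSel.etaBot N)
    case zetaBot P => exact zeta_of_betaSel P
end
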